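/- Let Δ be a ψ-saturated set in DmbC for some formula ψ. Then for all formulas α, β: (1) α ∧ β ∈ Δ iff α ∈ Δ and β ∈ Δ; (2) α ∨ β ∈ Δ iff α ∈ Δ or β ∈ Δ; (3) α → β ∈ Δ iff α ∉ Δ or β ∈ Δ; (4) if ¬α ∉ Δ then α ∈ Δ; (5) if α ∈ Δ and ¬α ∈ Δ then ∘α ∉ Δ; (6) Oα ∈ Δ if and only if α ∈ Δ' for every Δ' ∈ W_can with Δ R_can Δ'. -/

import Mathlib

/-- Formulas over the signature Σ = {∧, ∨, →, ¬, ∘, O}, with countably many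
propositional variables. -/
inductive Form : Type
  | var : ℕ → Form
  | and : Form → Form → Form
  | or : Form → Form → Form
  | imp : Form → Form → Form
  | neg : Form → Form
  | circ : Form → Form
  | obl : Form → Form

namespace Form
/-- ⊥_α := (α ∧ ¬α) ∧ ∘α -/
def bot (α : Form) : Form := (α.and α.neg).and α.circ
end Form

/-- Theorems of the Hilbert calculus DmbC: CPL⁺ axioms, (EM), (bc), (O-K), (O-E),
with rules Modus Ponens and O-necessitation. -/
inductive ThmDmbC : Form → Prop
  | A1 (α β : Form) : ThmDmbC (α.imp (β.imp α))
  | A2 (α β γ : Form) : ThmDmbC ((α.imp (β.imp γ)).imp ((α.imp β).imp (α.imp γ)))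
  | A3 (α β : Form) : ThmDmbC (α.imp (β.imp (α.and β)))
  | A4 (α β : Form) : ThmDmbC ((α.and β).imp α)
  | A5 (α β : Form) : ThmDmbC ((α.and β).imp β)
  | A6 (α β : Form) : ThmDmbC (α.imp (α.or β))
  | A7 (α β : Form) : ThmDmbC (β.imp (α.or β))
  | A8 (α β γ : Form) : ThmDmbC ((α.imp γ).imp ((β.imp γ).imp ((α.or β).imp γ)))
  | A9 (α β : Form) : ThmDmbC (((α.imp β).imp α).imp α)
  | EM (α : Form) : ThmDmbC (α.or α.neg)
  | bc (α β : Form) : ThmDmbC (α.circ.imp (α.imp (α.neg.imp β)))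
  | OK (α β : Form) : ThmDmbC ((α.imp β).obl.imp (α.obl.imp β.obl))
  | OE (α : Form) : ThmDmbC (α.bot.obl.imp α.bot)
  | mp {α β : Form} : ThmDmbC (α.imp β) → ThmDmbC α → ThmDmbC β
  | nec {α : Form} : ThmDmbC α → ThmDmbC α.obl

/-- conj γ [γ₂,…,γ_k] = γ ∧ γ₂ ∧ … ∧ γ_k -/
def conj (γ : Form) : List Form → Form
  | [] => γ
  | δ :: l => γ.and (conj δ l)

/-- Γ ⊢_DmbC φ iff ⊢ φ or ⊢ (γ₁ ∧ … ∧ γ_k) → φ for some γ₁,…,γ_k ∈ Γ, k ≥ 1. -/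
def DerivDmbC (Γ : Set Form) (φ : Form) : Prop :=
  ThmDmbC φ ∨ ∃ (γ : Form) (l : List Form),
    (∀ δ ∈ γ :: l, δ ∈ Γ) ∧ ThmDmbC ((conj γ l).imp φ)

/-- The three snapshots T = (1,0), t = (1,1), F = (0,1). -/
inductive SV : Type
  | T | t | F
deriving DecidableEq

/-- First coordinate of a snapshot. -/
def SV.p1 : SV → Bool
  | .T => true | .t => true | .F => false

/-- Second coordinate of a snapshot. -/
def SV.p2 : SV → Bool
  | .T => false | .t => true | .F => true

/-- Designated values: D = {T, t}, i.e. first coordinate is 1. -/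
def SV.desig (a : SV) : Prop := a.p1 = true

/-- Swap Kripke model conditions for DmbC on a serial frame (W,R) with
valuations v_w : Form → SV. -/
structure IsModelDmbC {W : Type} (R : W → W → Prop) (v : W → Form → SV) : Prop where
  serial : ∀ w, ∃ w', R w w'
  and_ : ∀ w α β, (v w (α.and β)).p1 = ((v w α).p1 && (v w β).p1)
  or_ : ∀ w α β, (v w (α.or β)).p1 = ((v w α).p1 || (v w β).p1)
  imp_ : ∀ w α β, (v w (α.imp β)).p1 = (!(v w α).p1 || (v w β).p1)
  neg_ : ∀ w α, (v w α.neg).p1 = (v w α).p2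
  circ_ : ∀ w α, (v w α.circ).p1 ≤ !((v w α).p1 && (v w α).p2)
  obl_ : ∀ w α, ((v w α.obl).p1 = true ↔ ∀ w', R w w' → (v w' α).p1 = true)

/-- Γ ⊨_DmbC φ : semantic consequence over all swap Kripke models for DmbC. -/
def SemDmbC (Γ : Set Form) (φ : Form) : Prop :=
  ∀ (W : Type) (R : W → W → Prop) (v : W → Form → SV), Nonempty W →
    IsModelDmbC R v → ∀ w : W, (∀ γ ∈ Γ, (v w γ).desig) → (v w φ).desig

/-- Δ is ψ-saturated in DmbC: Δ ⊬ ψ and Δ ∪ {φ} ⊢ ψ for every φ ∉ Δ. -/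
def Saturated (Δ : Set Form) (ψ : Form) : Prop :=
  ¬ DerivDmbC Δ ψ ∧ ∀ φ : Form, φ ∉ Δ → DerivDmbC (insert φ Δ) ψ

/-- The canonical worlds: the sets that are ψ-saturated in DmbC for some ψ. -/
def Wcan : Set (Set Form) := {Δ | ∃ ψ, Saturated Δ ψ}

/-- The canonical accessibility relation: Δ R_can Θ iff Den(Δ) ⊆ Θ. -/
def Rcan (Δ Θ : Set Form) : Prop := ∀ φ : Form, φ.obl ∈ Δ → φ ∈ Θ

/-!
A set Γ derives φ exactly when `⊢ γ₁ → (… → (γₖ → φ))` for some list of γᵢ ∈ Γ. In this normal form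
the hypotheses can be weakened, permuted and discharged freely, which gives modus ponens, the
deduction theorem, the finiteness of derivations and, through (O-K), the step from Den(Δ) ⊢ α to
Δ ⊢ Oα. A ψ-saturated Δ is closed under derivability and prime, because ψ ∉ Δ while Δ ⊢ φ → ψ for
every φ ∉ Δ; with the axioms this gives (1)–(5). For (6), if Oα ∉ Δ then Den(Δ) ⊬ α, and a
Zorn-maximal extension of Den(Δ) not deriving α is an α-saturated world accessible from Δ that
omits α.
-/

namespace Form

def impList : List Form → Form → Form
  | [], φ => φ
  | γ :: L, φ => γ.imp (impList L φ)

theorem impList_append (L M : List Form) (φ : Form) :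
    impList (L ++ M) φ = impList L (impList M φ) := by
  induction L with
  | nil => rfl
  | cons γ L ih => simp only [List.cons_append, impList, ih]

end Form

open Form

namespace ThmDmbC

variable {a b c φ : Form} {L M : List Form}

theorem imp_trans (h₁ : ThmDmbC (a.imp b)) (h₂ : ThmDmbC (b.imp c)) : ThmDmbC (a.imp c) :=
  mp (mp (A2 a b c) (mp (A1 (b.imp c) a) h₂)) h₁

theorem imp_self (a : Form) : ThmDmbC (a.imp a) :=
  mp (mp (A2 a (a.imp a) a) (A1 a (a.imp a))) (A1 a a)

theorem imp_mono_right (h : ThmDmbC (a.imp b)) : ThmDmbC ((c.imp a).imp (c.imp b)) :=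
  mp (A2 c a b) (mp (A1 (a.imp b) c) h)

theorem impList_of_thm (L : List Form) (h : ThmDmbC φ) : ThmDmbC (impList L φ) := by
  induction L with
  | nil => exact h
  | cons γ L ih => exact mp (A1 _ γ) ih

theorem impList_imp_distrib (L : List Form) (a b : Form) :
    ThmDmbC ((impList L (a.imp b)).imp ((impList L a).imp (impList L b))) := by
  induction L generalizing a b with
  | nil => exact imp_self _
  | cons γ L ih => exact imp_trans (imp_mono_right (ih a b)) (A2 γ (impList L a) (impList L b))

theorem impList_mp (h₁ : ThmDmbC (impList L (a.imp b))) (h₂ : ThmDmbC (impList L a)) :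
    ThmDmbC (impList L b) :=
  mp (mp (impList_imp_distrib L a b) h₁) h₂

theorem imp_impList_self (φ : Form) (L : List Form) : ThmDmbC (φ.imp (impList L φ)) := by
  induction L with
  | nil => exact imp_self φ
  | cons γ L ih => exact imp_trans ih (A1 _ γ)

theorem impList_of_mem (h : φ ∈ L) : ThmDmbC (impList L φ) := by
  induction L with
  | nil => simp at h
  | cons γ L ih =>
    rcases List.mem_cons.1 h with rfl | h
    · exact imp_impList_self φ L
    · exact mp (A1 _ γ) (ih h)

theorem impList_discharge (hL : ∀ δ ∈ L, ThmDmbC (impList M δ))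
    (h : ThmDmbC (impList M (impList L φ))) : ThmDmbC (impList M φ) := by
  induction L with
  | nil => exact h
  | cons γ L ih =>
    exact ih (fun δ hδ => hL δ (List.mem_cons_of_mem γ hδ)) (impList_mp h (hL γ (by simp)))

theorem impList_of_subset (hLM : ∀ δ ∈ L, δ ∈ M) (h : ThmDmbC (impList L φ)) :
    ThmDmbC (impList M φ) :=
  impList_discharge (fun δ hδ => impList_of_mem (hLM δ hδ)) (impList_of_thm M h)

theorem impList_conj {γ : Form} {l : List Form} (hM : ∀ δ ∈ γ :: l, δ ∈ M) :
    ThmDmbC (impList M (conj γ l)) := by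
  induction l generalizing γ with
  | nil => exact impList_of_mem (hM γ (by simp))
  | cons δ l ih =>
    have hγ : ThmDmbC (impList M γ) := impList_of_mem (hM γ (by simp))
    have hl : ThmDmbC (impList M (conj δ l)) := ih fun ε hε => hM ε (List.mem_cons_of_mem γ hε)
    exact impList_mp (impList_mp (impList_of_thm M (A3 γ (conj δ l))) hγ) hl

theorem conj_imp_of_mem {γ δ : Form} {l : List Form} (h : δ ∈ γ :: l) :
    ThmDmbC ((conj γ l).imp δ) := by
  induction l generalizing γ with
  | nil =>
    obtain rfl := List.mem_singleton.1 h
    exact imp_self δ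
  | cons ε l ih =>
    rcases List.mem_cons.1 h with rfl | h
    · exact A4 δ (conj ε l)
    · exact imp_trans (A5 γ (conj ε l)) (ih h)

theorem obl_impList_imp (L : List Form) (φ : Form) :
    ThmDmbC ((impList L φ).obl.imp (impList (L.map obl) φ.obl)) := by
  induction L with
  | nil => exact imp_self _
  | cons γ L ih => exact imp_trans (OK γ (impList L φ)) (imp_mono_right ih)

end ThmDmbC

open ThmDmbC

theorem derivDmbC_iff {Γ : Set Form} {φ : Form} :
    DerivDmbC Γ φ ↔ ∃ L : List Form, (∀ δ ∈ L, δ ∈ Γ) ∧ ThmDmbC (impList L φ) := by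
  constructor
  · rintro (h | ⟨γ, l, hΓ, h⟩)
    · exact ⟨[], by simp, h⟩
    · exact ⟨γ :: l, hΓ, impList_discharge (L := [conj γ l])
        (by simpa using impList_conj fun _ h => h) (impList_of_thm _ h)⟩
  · rintro ⟨_ | ⟨γ, l⟩, hΓ, h⟩
    · exact Or.inl h
    · exact Or.inr ⟨γ, l, hΓ, impList_discharge (M := [conj γ l])
        (fun _ hδ => conj_imp_of_mem hδ) (impList_of_thm _ h)⟩

namespace DerivDmbC

variable {Γ Δ : Set Form} {a b c φ : Form}

theorem of_thm (h : ThmDmbC φ) : DerivDmbC Γ φ :=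
  Or.inl h

theorem of_mem (h : φ ∈ Γ) : DerivDmbC Γ φ :=
  derivDmbC_iff.2 ⟨[φ], by simpa using h, ThmDmbC.imp_self φ⟩

theorem mono (hΓΔ : Γ ⊆ Δ) (h : DerivDmbC Γ φ) : DerivDmbC Δ φ := by
  obtain ⟨L, hL, h⟩ := derivDmbC_iff.1 h
  exact derivDmbC_iff.2 ⟨L, fun δ hδ => hΓΔ (hL δ hδ), h⟩

theorem mp (h₁ : DerivDmbC Γ (a.imp b)) (h₂ : DerivDmbC Γ a) : DerivDmbC Γ b := by
  obtain ⟨L₁, hL₁, h₁⟩ := derivDmbC_iff.1 h₁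
  obtain ⟨L₂, hL₂, h₂⟩ := derivDmbC_iff.1 h₂
  refine derivDmbC_iff.2 ⟨L₁ ++ L₂, List.forall_mem_append.2 ⟨hL₁, hL₂⟩, impList_mp (a := a) ?_ ?_⟩
  · exact impList_of_subset (fun δ hδ => List.mem_append_left L₂ hδ) h₁
  · exact impList_of_subset (fun δ hδ => List.mem_append_right L₁ hδ) h₂

theorem imp_of_insert (h : DerivDmbC (insert a Γ) b) : DerivDmbC Γ (a.imp b) := by
  classical
  obtain ⟨L, hL, h⟩ := derivDmbC_iff.1 h
  refine derivDmbC_iff.2 ⟨L.filter (· ≠ a), fun δ hδ => ?_, ?_⟩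
  · simp only [List.mem_filter, decide_eq_true_eq] at hδ
    exact (hL δ hδ.1).resolve_left hδ.2
  · change ThmDmbC (impList _ (impList [a] b))
    rw [← impList_append]
    refine impList_of_subset (fun δ hδ => ?_) h
    by_cases hδa : δ = a <;> simp [hδa, hδ]

theorem imp_trans (h₁ : DerivDmbC Γ (a.imp b)) (h₂ : DerivDmbC Γ (b.imp c)) :
    DerivDmbC Γ (a.imp c) :=
  imp_of_insert <| (h₂.mono (Set.subset_insert a Γ)).mp <|
    (h₁.mono (Set.subset_insert a Γ)).mp (of_mem (Set.mem_insert a Γ))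

theorem exists_mem_of_sUnion {c : Set (Set Form)} (hc : IsChain (· ⊆ ·) c) (hne : c.Nonempty)
    (h : DerivDmbC (⋃₀ c) φ) : ∃ Θ ∈ c, DerivDmbC Θ φ := by
  obtain ⟨L, hL, h⟩ := derivDmbC_iff.1 h
  obtain ⟨Θ, hΘ, hLΘ⟩ :=
    hc.directedOn.exists_mem_subset_of_finite_of_subset_sUnion hne L.finite_toSet hL
  exact ⟨Θ, hΘ, derivDmbC_iff.2 ⟨L, hLΘ, h⟩⟩

end DerivDmbC

def den (Δ : Set Form) : Set Form := {φ | φ.obl ∈ Δ}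

theorem DerivDmbC.obl_of_den {Δ : Set Form} {φ : Form} (h : DerivDmbC (den Δ) φ) :
    DerivDmbC Δ φ.obl := by
  obtain ⟨L, hL, h⟩ := derivDmbC_iff.1 h
  exact derivDmbC_iff.2
    ⟨L.map obl, List.forall_mem_map.2 hL, ThmDmbC.mp (obl_impList_imp L φ) (nec h)⟩

theorem exists_saturated_superset {Γ : Set Form} {ψ : Form} (h : ¬ DerivDmbC Γ ψ) :
    ∃ Θ, Γ ⊆ Θ ∧ Saturated Θ ψ := by
  set S := {Θ | Γ ⊆ Θ ∧ ¬ DerivDmbC Θ ψ}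
  have hchains : ∀ c ⊆ S, IsChain (· ⊆ ·) c → c.Nonempty → ∃ ub ∈ S, ∀ Θ ∈ c, Θ ⊆ ub := by
    intro c hcS hc hne
    refine ⟨⋃₀ c, ⟨?_, fun hd => ?_⟩, fun _ => Set.subset_sUnion_of_mem⟩
    · obtain ⟨Θ, hΘ⟩ := hne
      exact (hcS hΘ).1.trans (Set.subset_sUnion_of_mem hΘ)
    · obtain ⟨Θ, hΘ, hd⟩ := hd.exists_mem_of_sUnion hc hne
      exact (hcS hΘ).2 hd
  obtain ⟨Θ, hΓΘ, hmax⟩ := zorn_subset_nonempty S hchains Γ ⟨subset_rfl, h⟩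
  refine ⟨Θ, hΓΘ, hmax.prop.2, fun φ hφ => ?_⟩
  by_contra hφψ
  exact hφ (hmax.2 ⟨hΓΘ.trans (Set.subset_insert φ Θ), hφψ⟩ (Set.subset_insert φ Θ)
    (Set.mem_insert φ Θ))

namespace Saturated

variable {Δ : Set Form} {ψ α β : Form}

theorem mem_of_deriv (h : Saturated Δ ψ) (hd : DerivDmbC Δ α) : α ∈ Δ := by
  by_contra hα
  exact h.1 ((h.2 α hα).imp_of_insert.mp hd)

theorem mem_of_imp_mem (h : Saturated Δ ψ) (hαβ : α.imp β ∈ Δ) (hα : α ∈ Δ) : β ∈ Δ :=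
  h.mem_of_deriv ((DerivDmbC.of_mem hαβ).mp (.of_mem hα))

theorem mem_of_thm_imp (h : Saturated Δ ψ) (hαβ : ThmDmbC (α.imp β)) (hα : α ∈ Δ) : β ∈ Δ :=
  h.mem_of_deriv ((DerivDmbC.of_thm hαβ).mp (.of_mem hα))

theorem deriv_imp_of_not_mem (h : Saturated Δ ψ) (hα : α ∉ Δ) : DerivDmbC Δ (α.imp ψ) :=
  (h.2 α hα).imp_of_insert

theorem mem_or_mem_of_deriv_or (h : Saturated Δ ψ) (hd : DerivDmbC Δ (α.or β)) :
    α ∈ Δ ∨ β ∈ Δ := by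
  by_contra! hαβ
  exact h.1 <| ((DerivDmbC.of_thm (A8 α β ψ)).mp (h.deriv_imp_of_not_mem hαβ.1)).mp
    (h.deriv_imp_of_not_mem hαβ.2) |>.mp hd

theorem target_imp_mem (h : Saturated Δ ψ) (β : Form) : ψ.imp β ∈ Δ := by
  by_contra hψβ
  exact h.1 ((DerivDmbC.of_thm (A9 ψ β)).mp (h.deriv_imp_of_not_mem hψβ))

end Saturated

/-- Properties of ψ-saturated sets in DmbC. -/
theorem saturated_properties (Δ : Set Form) (ψ : Form) (h : Saturated Δ ψ) :
    ∀ α β : Form,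
      (α.and β ∈ Δ ↔ α ∈ Δ ∧ β ∈ Δ) ∧
      (α.or β ∈ Δ ↔ α ∈ Δ ∨ β ∈ Δ) ∧
      (α.imp β ∈ Δ ↔ α ∉ Δ ∨ β ∈ Δ) ∧
      (α.neg ∉ Δ → α ∈ Δ) ∧
      (α ∈ Δ → α.neg ∈ Δ → α.circ ∉ Δ) ∧
      (α.obl ∈ Δ ↔ ∀ Θ ∈ Wcan, Rcan Δ Θ → α ∈ Θ) := by
  intro α β
  refine ⟨⟨fun hαβ => ⟨h.mem_of_thm_imp (A4 α β) hαβ, h.mem_of_thm_imp (A5 α β) hαβ⟩,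
      fun ⟨hα, hβ⟩ => h.mem_of_imp_mem (h.mem_of_thm_imp (A3 α β) hα) hβ⟩,
    ⟨fun hαβ => h.mem_or_mem_of_deriv_or (.of_mem hαβ),
      fun hαβ => hαβ.elim (h.mem_of_thm_imp (A6 α β)) (h.mem_of_thm_imp (A7 α β))⟩,
    ⟨fun hαβ => or_iff_not_imp_left.2 fun hα => h.mem_of_imp_mem hαβ (not_not.1 hα), ?_⟩,
    fun hα => (h.mem_or_mem_of_deriv_or (.of_thm (EM α))).resolve_right hα,
    fun hα hnα hcα => h.1 <| (((DerivDmbC.of_thm (bc α ψ)).mp (.of_mem hcα)).mp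
      (.of_mem hα)).mp (.of_mem hnα),
    ⟨fun hOα Θ _ hR => hR α hOα, fun hall => ?_⟩⟩
  · rintro (hα | hβ)
    · exact h.mem_of_deriv <|
        (h.deriv_imp_of_not_mem hα).imp_trans (.of_mem (h.target_imp_mem β))
    · exact h.mem_of_thm_imp (A1 β α) hβ
  · by_contra hOα
    have hden : ¬ DerivDmbC (den Δ) α := fun hd => hOα (h.mem_of_deriv hd.obl_of_den)
    obtain ⟨Θ, hdenΘ, hΘ⟩ := exists_saturated_superset hden
    exact hΘ.1 (.of_mem (hall Θ ⟨α, hΘ⟩ fun φ hφ => hdenΘ hφ))
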